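/- arXiv:1707.06975 — 4 statements merged into one kernel-verified Lean document; each statement's English description precedes it below -/
import Mathlib

section
/- Let L be a field, h(x) ∈ L[x] the monic irreducible polynomial of degree k of an element z with z^n = 1, K = L(z), and φ : K → L a nonzero L-linear functional. Let C = { (φ(c z^i))_{0 ≤ i < n} : c ∈ K }. Then the dual code C^⊥ (orthogonal complement under the standard bilinear form on L^n) equals the cyclic code generated by h(x), i.e., the set of coefficient vectors of polynomials divisible by h(x) modulo x^n − 1. -/
open Polynomial Finset

theorem dual_code_eq_cyclic_code
    (L K : Type*) [Field L] [Field K] [Algebra L K]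
    (z : K) (n k : ℕ) (hn : 0 < n) (hzn : z ^ n = 1)
    (hgen : Algebra.adjoin L {z} = ⊤)
    (h : L[X]) (hmonic : h.Monic) (hirr : Irreducible h)
    (hroot : Polynomial.aeval z h = 0) (hdeg : h.natDegree = k)
    (φ : K →ₗ[L] L) (hφ : φ ≠ 0) :
    {v : Fin n → L | ∀ c : K, ∑ i : Fin n, v i * φ (c * z ^ (i : ℕ)) = 0}
      = {v : Fin n → L | h ∣ ∑ i : Fin n, Polynomial.C (v i) * X ^ (i : ℕ)} := by
  have hmin : minpoly L z = h := (minpoly.eq_of_irreducible_of_monic hirr hroot hmonic).symm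
  ext v
  simp only [Set.mem_setOf_eq]
  have key : ∀ c : K, ∑ i : Fin n, v i * φ (c * z ^ (i : ℕ))
      = φ (c * Polynomial.aeval z (∑ i : Fin n, Polynomial.C (v i) * X ^ (i : ℕ))) := by
    intro c
    rw [map_sum, Finset.mul_sum, map_sum]
    refine Finset.sum_congr rfl fun i _ => ?_
    rw [_root_.map_mul (Polynomial.aeval z), aeval_C, aeval_X_pow,
      show c * (algebraMap L K (v i) * z ^ (i : ℕ)) = v i • (c * z ^ (i : ℕ)) by
        rw [Algebra.smul_def]; ring,
      map_smul, smul_eq_mul]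
  constructor
  · intro hv
    have hw : Polynomial.aeval z (∑ i : Fin n, Polynomial.C (v i) * X ^ (i : ℕ)) = 0 := by
      by_contra hw
      apply hφ
      ext x
      have hx := hv (x * (Polynomial.aeval z (∑ i : Fin n, Polynomial.C (v i) * X ^ (i : ℕ)))⁻¹)
      rw [key, mul_assoc, inv_mul_cancel₀ hw, mul_one] at hx
      simpa using hx
    rw [← hmin]
    exact minpoly.dvd L z hw
  · intro hdvd c
    obtain ⟨q, hq⟩ := hdvd
    rw [key, hq, _root_.map_mul (Polynomial.aeval z), hroot, zero_mul, mul_zero, map_zero]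
end

section
/- Let ℓ be an odd prime, z a primitive ℓ-th root of unity in ℂ, K = ℚ(z), and χ the Legendre symbol mod ℓ. Suppose ℓ ≡ 3 (mod 4). For c ∈ K define D(c) = ∑_{i=1}^{ℓ−1} χ(i) · T(c·z^{−1/i}) · z^i, where T : K → ℚ(η) is the trace to the quadratic subfield ℚ(η) and −1/i is computed mod ℓ. Then D(c) = 0 for all c ∈ K. -/
open Finset

/-- For `ℓ ≡ 3 mod 4`, the obstruction `D(c)` vanishes for every `c` in the
cyclotomic field `K = ℚ(z)` (realized as the ℚ-span of the powers of `z` in `ℂ`),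
where `T` is the trace from `K` to its quadratic subfield, characterized by
`T(z^j) = ∑_{r ∈ R} z^{jr}`. -/
theorem D_vanishes
    (ℓ : ℕ) [Fact (Nat.Prime ℓ)] (hmod : ℓ % 4 = 3)
    (z : ℂ) (hz : IsPrimitiveRoot z ℓ)
    (T : ℂ →ₗ[ℚ] ℂ)
    (hT : ∀ j : ZMod ℓ, T (z ^ j.val) =
      ∑ r ∈ univ.filter (fun r : ZMod ℓ => r ≠ 0 ∧ IsSquare r), z ^ (j * r).val)
    (c : ℂ) (hc : c ∈ Submodule.span ℚ (Set.range fun j : ZMod ℓ => z ^ j.val)) :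
    ∑ i ∈ univ.filter (fun i : ZMod ℓ => i ≠ 0),
      (legendreSym ℓ (i.val : ℤ) : ℂ) * T (c * z ^ (-i⁻¹ : ZMod ℓ).val) * z ^ i.val = 0 := by
  have hp : Nat.Prime ℓ := Fact.out
  have hzl : z ^ ℓ = 1 := hz.pow_eq_one
  have hpow : ∀ n : ℕ, z ^ n = z ^ (n % ℓ) := by
    intro n
    conv_lhs => rw [← Nat.div_add_mod n ℓ]
    rw [pow_add, pow_mul, hzl, one_pow, one_mul]
  have hmul : ∀ a b : ZMod ℓ, z ^ a.val * z ^ b.val = z ^ (a + b).val := by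
    intro a b
    rw [← pow_add, hpow, ZMod.val_add]
  have hχ : ∀ i : ZMod ℓ, (legendreSym ℓ (i.val : ℤ)) = quadraticChar (ZMod ℓ) i := by
    intro i
    simp [legendreSym, ZMod.natCast_val, ZMod.cast_id]
  have hχ1 : quadraticChar (ZMod ℓ) (-1) = -1 := by
    rw [quadraticChar_neg_one_iff_not_isSquare]
    rw [ZMod.exists_sq_eq_neg_one_iff]
    simp [hmod]
  have hnsq : ¬ IsSquare (-1 : ZMod ℓ) := by
    rw [ZMod.exists_sq_eq_neg_one_iff]
    simp [hmod]
  -- key monomial case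
  have key : ∀ j : ZMod ℓ,
      ∑ i ∈ univ.filter (fun i : ZMod ℓ => i ≠ 0),
        (legendreSym ℓ (i.val : ℤ) : ℂ) * T (z ^ j.val * z ^ (-i⁻¹ : ZMod ℓ).val) * z ^ i.val
        = 0 := by
    intro j
    have step1 : ∀ i : ZMod ℓ,
        (legendreSym ℓ (i.val : ℤ) : ℂ) * T (z ^ j.val * z ^ (-i⁻¹ : ZMod ℓ).val) * z ^ i.val
        = ∑ r ∈ univ.filter (fun r : ZMod ℓ => r ≠ 0 ∧ IsSquare r),
            (quadraticChar (ZMod ℓ) i : ℂ) * z ^ (((j + -i⁻¹) * r + i).val) := by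
      intro i
      rw [hmul j (-i⁻¹), hT (j + -i⁻¹), hχ, Finset.mul_sum, Finset.sum_mul]
      refine Finset.sum_congr rfl fun r _ => ?_
      rw [mul_assoc, hmul]
    rw [Finset.sum_congr rfl fun i _ => step1 i, Finset.sum_comm]
    refine Finset.sum_eq_zero fun r hr => ?_
    rw [Finset.mem_filter] at hr
    obtain ⟨-, hr0, hrsq⟩ := hr
    refine Finset.sum_involution (fun i _ => -r * i⁻¹) ?_ ?_ ?_ ?_
    · -- cancellation
      intro i hi
      rw [Finset.mem_filter] at hi
      have hi0 : i ≠ 0 := hi.2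
      have hginv : (-r * i⁻¹)⁻¹ = -r⁻¹ * i := by
        rw [mul_inv, inv_inv, inv_neg, neg_mul]
      have hexp : (j + -(-r * i⁻¹)⁻¹) * r + (-r * i⁻¹) = (j + -i⁻¹) * r + i := by
        rw [hginv]
        field_simp
        ring
      have hχi : quadraticChar (ZMod ℓ) (-r * i⁻¹) = - quadraticChar (ZMod ℓ) i := by
        have hiinv : quadraticChar (ZMod ℓ) i⁻¹ = quadraticChar (ZMod ℓ) i := by
          have hprod : quadraticChar (ZMod ℓ) i⁻¹ * quadraticChar (ZMod ℓ) i = 1 := by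
            rw [← map_mul, inv_mul_cancel₀ hi0, map_one]
          rcases quadraticChar_dichotomy hi0 with h | h <;>
            rcases quadraticChar_dichotomy (inv_ne_zero hi0) with h' | h' <;>
              rw [h, h'] at hprod ⊢ <;> omega
        have hχr : quadraticChar (ZMod ℓ) r = 1 :=
          (quadraticChar_one_iff_isSquare hr0).2 hrsq
        have e : -r * i⁻¹ = (-1) * r * i⁻¹ := by ring
        rw [e, map_mul, map_mul, hχ1, hχr, hiinv]
        ring
      rw [hexp, hχi]
      push_cast
      ring
    · -- no fixed points (when term nonzero)
      intro i hi _
      rw [Finset.mem_filter] at hi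
      have hi0 : i ≠ 0 := hi.2
      intro heq
      obtain ⟨s, hs⟩ := hrsq
      have hs0 : s ≠ 0 := by
        rintro rfl; simp at hs; exact hr0 hs
      apply hnsq
      refine ⟨i * s⁻¹, ?_⟩
      have h1 : -r * i⁻¹ = i := heq
      field_simp at h1 ⊢
      rw [hs] at h1
      linear_combination h1
    · intro i hi
      rw [Finset.mem_filter] at hi ⊢
      exact ⟨Finset.mem_univ _, by
        have := hi.2
        exact mul_ne_zero (neg_ne_zero.2 hr0) (inv_ne_zero hi.2)⟩
    · intro i hi
      rw [Finset.mem_filter] at hi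
      have hi0 : i ≠ 0 := hi.2
      field_simp
  -- span induction
  induction hc using Submodule.span_induction with
  | mem x hx =>
    obtain ⟨j, rfl⟩ := hx
    exact key j
  | zero => simp
  | add x y hx hy ihx ihy =>
    have hsplit : ∑ i ∈ univ.filter (fun i : ZMod ℓ => i ≠ 0),
        (legendreSym ℓ (i.val : ℤ) : ℂ) * T ((x + y) * z ^ (-i⁻¹ : ZMod ℓ).val) * z ^ i.val
        = (∑ i ∈ univ.filter (fun i : ZMod ℓ => i ≠ 0),
            (legendreSym ℓ (i.val : ℤ) : ℂ) * T (x * z ^ (-i⁻¹ : ZMod ℓ).val) * z ^ i.val)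
          + ∑ i ∈ univ.filter (fun i : ZMod ℓ => i ≠ 0),
            (legendreSym ℓ (i.val : ℤ) : ℂ) * T (y * z ^ (-i⁻¹ : ZMod ℓ).val) * z ^ i.val := by
      rw [← Finset.sum_add_distrib]
      refine Finset.sum_congr rfl fun i _ => ?_
      rw [add_mul, map_add, mul_add, add_mul]
    rw [hsplit, ihx, ihy, add_zero]
  | smul a x hx ih =>
    rw [show (0:ℂ) = (a:ℂ) * 0 by ring, ← ih, Finset.mul_sum]
    refine Finset.sum_congr rfl fun i _ => ?_
    rw [smul_mul_assoc, map_smul, Rat.smul_def]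
    ring
end

section
/- Let ℓ be a prime ≡ 3 (mod 4), z a primitive ℓ-th root of unity, R the quadratic residues mod ℓ, and χ the Legendre symbol. Then for every j with 0 < j < ℓ, ∑_{i ∈ (ℤ/ℓ)^×} ∑_{r ∈ R} χ(i) · z^{r j − r·i^{−1} + i} = 0. -/
open Finset

private lemma leg_eq_qc (ℓ : ℕ) [Fact (Nat.Prime ℓ)] (i : ZMod ℓ) :
    legendreSym ℓ (i.val : ℤ) = quadraticChar (ZMod ℓ) i := by
  unfold legendreSym
  congr 1
  push_cast
  simp [ZMod.natCast_val, ZMod.cast_id]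

theorem double_sum_vanishes_case_neg_one
    (ℓ : ℕ) [Fact (Nat.Prime ℓ)] (hmod : ℓ % 4 = 3)
    (z : ℂ) (hz : IsPrimitiveRoot z ℓ)
    (j : ZMod ℓ) (hj : j ≠ 0) :
    ∑ i ∈ univ.filter (fun i : ZMod ℓ => i ≠ 0),
      ∑ r ∈ univ.filter (fun r : ZMod ℓ => r ≠ 0 ∧ IsSquare r),
        (legendreSym ℓ (i.val : ℤ) : ℂ) * z ^ (r * j - r * i⁻¹ + i).val = 0 := by
  have hp : Nat.Prime ℓ := Fact.out
  have hl2 : ℓ ≠ 2 := by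
    intro h; rw [h] at hmod; norm_num at hmod
  have hchar : ringChar (ZMod ℓ) ≠ 2 := by
    rw [ZMod.ringChar_zmod_n]; exact hl2
  have hneg1 : quadraticChar (ZMod ℓ) (-1) = -1 := by
    rw [quadraticChar_neg_one hchar, ZMod.card]
    exact ZMod.χ₄_nat_three_mod_four hmod
  rw [Finset.sum_comm]
  apply Finset.sum_eq_zero
  intro r hr
  rw [Finset.mem_filter] at hr
  obtain ⟨-, hr0, hrsq⟩ := hr
  have hχr : quadraticChar (ZMod ℓ) r = 1 :=
    (quadraticChar_one_iff_isSquare hr0).mpr hrsq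
  apply Finset.sum_involution (fun i _ => -r * i⁻¹)
  · intro i hi
    rw [Finset.mem_filter] at hi
    have hi0 : i ≠ 0 := hi.2
    have h1 : (-r * i⁻¹)⁻¹ = -r⁻¹ * i := by
      rw [mul_inv, inv_neg, inv_inv]
    have h2 : r * (-r⁻¹ * i) = -i := by
      field_simp
    have hexp : r * j - r * (-r * i⁻¹)⁻¹ + (-r * i⁻¹) = r * j - r * i⁻¹ + i := by
      rw [h1, h2]; ring
    have hleg : (legendreSym ℓ (((-r * i⁻¹ : ZMod ℓ).val : ℤ)) : ℂ)
        = -(legendreSym ℓ ((i.val : ℤ)) : ℂ) := by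
      rw [leg_eq_qc, leg_eq_qc]
      have : quadraticChar (ZMod ℓ) (-r * i⁻¹)
          = quadraticChar (ZMod ℓ) (-1) * quadraticChar (ZMod ℓ) r
            * quadraticChar (ZMod ℓ) i⁻¹ := by
        rw [← map_mul, ← map_mul]; ring_nf
      have hinv : quadraticChar (ZMod ℓ) i⁻¹ = quadraticChar (ZMod ℓ) i := by
        have ha : quadraticChar (ZMod ℓ) i⁻¹ * quadraticChar (ZMod ℓ) i = 1 := by
          rw [← map_mul, inv_mul_cancel₀ hi0, map_one]
        have hb : quadraticChar (ZMod ℓ) i ^ 2 = 1 := quadraticChar_sq_one hi0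
        linear_combination (quadraticChar (ZMod ℓ) i) * ha
          - (quadraticChar (ZMod ℓ) i⁻¹) * hb
      rw [this, hneg1, hχr, hinv]
      push_cast
      ring
    rw [hexp, hleg]
    ring
  · intro i hi _
    rw [Finset.mem_filter] at hi
    have hi0 : i ≠ 0 := hi.2
    intro h
    have hsq : i * i = -r := by
      field_simp at h
      linear_combination -h
    obtain ⟨s, hs⟩ := hrsq
    have hs0 : s ≠ 0 := by rintro rfl; simp at hs; exact hr0 hs
    have : IsSquare (-1 : ZMod ℓ) := by
      refine ⟨i * s⁻¹, ?_⟩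
      field_simp
      rw [hs] at hsq
      linear_combination -hsq
    rw [ZMod.exists_sq_eq_neg_one_iff] at this
    exact this hmod
  · intro i hi
    rw [Finset.mem_filter] at hi ⊢
    exact ⟨Finset.mem_univ _, by
      have hi0 : i ≠ 0 := hi.2
      exact mul_ne_zero (neg_ne_zero.mpr hr0) (inv_ne_zero hi0)⟩
  · intro i hi
    rw [Finset.mem_filter] at hi
    have hi0 : i ≠ 0 := hi.2
    field_simp
end

section
/- Let ℓ be an odd prime and z a primitive ℓ-th root of unity over ℚ. Then every square submatrix of the ℓ × ℓ matrix M with entries M_{ij} = z^{ij} (indices i, j running over ℤ/ℓ) has nonzero determinant (Chebotarëv's theorem on roots of unity). -/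
/-!
Let `a i`, `b j` be the residues of the chosen rows and columns. The minor is `P(z)` for
`P = det (X ^ (a i * b j)) ∈ ℤ[X]`. Writing `X ^ (a * b) = ∑ₘ (b.choose m) (X ^ a - 1) ^ m` and
expanding the determinant multilinearly gives `P = (X - 1) ^ N * Q` with `N = 0 + 1 + ⋯ + (k - 1)`
and `Q(1) = V(a) · det ((b i).choose j)`, `V` the Vandermonde determinant. As
`j! * b.choose j` is the falling factorial `b (b - 1) ⋯ (b - j + 1)`, also
`∏ j! · det ((b i).choose j) = V(b)`; as the `a i` and the `b j` are distinct mod `ℓ`,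
this gives `ℓ ∤ Q(1)`. But `P(z) = 0` forces `Q(z) = 0`, hence the
cyclotomic polynomial `Φ_ℓ` divides `Q` and `ℓ = Φ_ℓ(1)` divides `Q(1)`.
-/

open Polynomial Finset Matrix Function Nat

theorem Fin.val_le_of_strictMono {k : ℕ} {f : Fin k → ℕ} (hf : StrictMono f) (i : Fin k) :
    (i : ℕ) ≤ f i := by
  obtain ⟨n, hn⟩ := i
  induction n with
  | zero => exact Nat.zero_le _
  | succ n ih => exact (ih (by omega)).trans_lt (hf (Fin.mk_lt_mk.2 n.lt_succ_self))

theorem Tuple.val_le_apply_sort {k : ℕ} {g : Fin k → ℕ} (hg : Injective g) (i : Fin k) :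
    (i : ℕ) ≤ g (sort g i) :=
  Fin.val_le_of_strictMono ((monotone_sort g).strictMono_of_injective
    (hg.comp (sort g).injective)) i

theorem Fin.sum_val_le_sum_of_injective {k : ℕ} {g : Fin k → ℕ} (hg : Injective g) :
    ∑ i : Fin k, (i : ℕ) ≤ ∑ i, g i := by
  rw [← Equiv.sum_comp (Tuple.sort g) g]
  exact sum_le_sum fun i _ => Tuple.val_le_apply_sort hg i

theorem Fin.exists_perm_of_injective_of_sum_eq {k : ℕ} {g : Fin k → ℕ} (hg : Injective g)
    (h : ∑ i, g i = ∑ i : Fin k, (i : ℕ)) : ∃ π : Equiv.Perm (Fin k), ∀ i, g i = π i := by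
  rw [← Equiv.sum_comp (Tuple.sort g) g, eq_comm,
    sum_eq_sum_iff_of_le fun i _ => Tuple.val_le_apply_sort hg i] at h
  exact ⟨(Tuple.sort g).symm,
    fun i => by simpa using (h ((Tuple.sort g).symm i) (mem_univ _)).symm⟩

section CommRing

variable {R : Type*} [CommRing R]

theorem pow_mul_eq_sum_choose (x : R) (a : ℕ) {b L : ℕ} (hb : b < L) :
    x ^ (a * b) = ∑ m ∈ range L, (x ^ a - 1) ^ m * (b.choose m : R) := by
  rw [pow_mul, ← sub_add_cancel (x ^ a) 1, add_pow, sub_add_cancel]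
  simp only [one_pow, mul_one]
  refine sum_subset (range_subset_range.2 hb) fun m _ hm => ?_
  simp [Nat.choose_eq_zero_of_lt (by simpa using hm : b < m)]

theorem Matrix.det_of_sum_pow_mul {k : ℕ} (y : Fin k → R) (w : ℕ → Fin k → R) (L : ℕ) :
    (of fun i j => ∑ m ∈ range L, y i ^ m * w m j).det =
      ∑ g ∈ Fintype.piFinset fun _ => range L,
        (∏ i, y i ^ g i) * (of fun i j => w (g i) j).det := by
  have h := (detRowAlternating (n := Fin k) (R := R)).toMultilinearMap.map_sum_finset
    (fun i m => y i ^ m • w m) fun _ => range L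
  simp only [MultilinearMap.map_smul_univ, smul_eq_mul] at h
  have hrows : (of fun i j => ∑ m ∈ range L, y i ^ m * w m j) =
      fun i => ∑ m ∈ range L, y i ^ m • w m := by
    ext i j
    simp [Finset.sum_apply]
  rw [hrows]
  exact h

theorem Matrix.det_of_choose_eq_zero_of_not_injective {k : ℕ} (b g : Fin k → ℕ)
    (hg : ¬Injective g) : (of fun i j => ((b j).choose (g i) : R)).det = 0 := by
  obtain ⟨i, i', h, hne⟩ : ∃ i i', g i = g i' ∧ i ≠ i' := by
    simpa [Injective] using hg
  exact det_zero_of_row_eq hne (funext fun j => by simp [h])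

theorem Matrix.det_vandermonde_mul_det_choose {k : ℕ} (a b : Fin k → ℕ) :
    (vandermonde fun i => (a i : R)).det * (of fun i j : Fin k => ((b i).choose j : R)).det =
      ∑ π : Equiv.Perm (Fin k), (∏ i, (a i : R) ^ (π i : ℕ)) *
        (of fun i j => ((b j).choose (π i) : R)).det := by
  rw [← det_transpose, det_apply', sum_mul]
  refine sum_congr rfl fun π _ => ?_
  rw [show (of fun i j => ((b j).choose (π i) : R)) =
      (of fun i j : Fin k => ((b i).choose j : R))ᵀ.submatrix π id from rfl, det_permute,
    det_transpose]
  simp only [transpose_apply, vandermonde_apply]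
  ring

theorem Polynomial.det_X_pow_mul_eq_sum {k L : ℕ} (a b : Fin k → ℕ) (hb : ∀ j, b j < L) :
    (of fun i j => (X : R[X]) ^ (a i * b j)).det =
      ∑ g ∈ Fintype.piFinset fun _ => range L,
        (X - 1) ^ (∑ i, g i) * ((∏ i, (∑ e ∈ range (a i), X ^ e) ^ g i) *
          (of fun i j => ((b j).choose (g i) : R[X])).det) := by
  have hrow : ∀ i j, (X : R[X]) ^ (a i * b j) =
      ∑ m ∈ range L, ((X - 1) * ∑ e ∈ range (a i), X ^ e) ^ m * ((b j).choose m : R[X]) := by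
    intro i j
    rw [mul_geom_sum]
    exact pow_mul_eq_sum_choose _ _ (hb j)
  simp_rw [hrow, det_of_sum_pow_mul, mul_pow, prod_mul_distrib, prod_pow_eq_pow_sum, mul_assoc]

theorem Polynomial.exists_det_X_pow_mul_eq_X_sub_one_pow_mul {k : ℕ} (a b : Fin k → ℕ) :
    ∃ Q : R[X], (of fun i j => (X : R[X]) ^ (a i * b j)).det =
        (X - 1) ^ (∑ i : Fin k, (i : ℕ)) * Q ∧
      Q.eval 1 = (vandermonde fun i => (a i : R)).det *
        (of fun i j : Fin k => ((b i).choose j : R)).det := by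
  set N := ∑ i : Fin k, (i : ℕ)
  set L := k + ∑ j, b j + 1
  have hb : ∀ j, b j < L := fun j => by
    have := single_le_sum (fun j _ => Nat.zero_le (b j)) (mem_univ j)
    omega
  refine ⟨∑ g ∈ Fintype.piFinset fun _ => range L, (X - 1) ^ (∑ i, g i - N) *
    ((∏ i, (∑ e ∈ range (a i), X ^ e) ^ g i) * (of fun i j => ((b j).choose (g i) : R[X])).det),
    ?_, ?_⟩
  · rw [det_X_pow_mul_eq_sum a b hb, mul_sum]
    refine sum_congr rfl fun g _ => ?_
    by_cases hg : Injective g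
    · rw [← mul_assoc ((X - 1 : R[X]) ^ N), ← pow_add,
        Nat.add_sub_cancel' (Fin.sum_val_le_sum_of_injective hg)]
    · simp [det_of_choose_eq_zero_of_not_injective b g hg]
  · have hdet : ∀ g : Fin k → ℕ, ((of fun i j => ((b j).choose (g i) : R[X])).det).eval 1 =
        (of fun i j => ((b j).choose (g i) : R)).det := fun g => by
      rw [← coe_evalRingHom, RingHom.map_det]
      congr 1
      ext i j
      simp
    simp only [eval_finsetSum, eval_mul, eval_pow, eval_prod, eval_sub, eval_X, eval_one,
      sub_self, one_pow, sum_const, card_range, nsmul_one, hdet]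
    rw [det_vandermonde_mul_det_choose]
    symm
    -- at `X = 1` only the terms where `g` is a permutation of `0, …, k - 1` survive
    refine sum_of_injOn (fun π i => (π i : ℕ)) (fun π _ π' _ h => ?_) (fun π _ => ?_)
      (fun g _ hg => ?_) (fun π _ => ?_)
    · exact Equiv.ext fun i => Fin.ext (congrFun h i)
    · simp only [Fintype.coe_piFinset, Set.mem_pi, Set.mem_univ, mem_coe, mem_range,
        forall_const]
      intro i
      have := (π i).isLt
      omega
    · by_cases hinj : Injective g
      · have hN : N < ∑ i, g i := by
          refine (Fin.sum_val_le_sum_of_injective hinj).lt_of_ne fun h => hg ?_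
          obtain ⟨π, hπ⟩ := Fin.exists_perm_of_injective_of_sum_eq hinj h.symm
          exact ⟨π, mem_coe.2 (mem_univ π), _root_.funext fun i => (hπ i).symm⟩
        rw [zero_pow (by omega), zero_mul]
      · rw [det_of_choose_eq_zero_of_not_injective b g hinj, mul_zero, mul_zero]
    · simp [N, Equiv.sum_comp π (fun i : Fin k => (i : ℕ))]

end CommRing

theorem Matrix.factorial_mul_det_choose {S : Type*} [CommRing S] [IsDomain S] {k : ℕ}
    (b : Fin k → ℕ) :
    (∏ j : Fin k, ((j : ℕ)! : S)) * (of fun i j : Fin k => ((b i).choose j : S)).det =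
      (vandermonde fun i => (b i : S)).det := by
  rw [det_eval_matrixOfPolynomials_eq_det_vandermonde _ (fun j => descPochhammer S j)
    (fun j => descPochhammer_natDegree S j) (fun j => monic_descPochhammer S j),
    ← det_transpose, ← det_mul_column, ← det_transpose]
  congr 1
  ext i j
  simp [descPochhammer_eval_eq_descFactorial, descFactorial_eq_factorial_mul_choose]

theorem not_dvd_det_vandermonde_mul_det_choose {p k : ℕ} [Fact p.Prime] {a b : Fin k → ℕ}
    (ha : Injective fun i => (a i : ZMod p)) (hb : Injective fun i => (b i : ZMod p)) :
    ¬(p : ℤ) ∣ (vandermonde fun i => (a i : ℤ)).det *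
      (of fun i j : Fin k => ((b i).choose j : ℤ)).det := by
  have hV : (vandermonde fun i => (a i : ℤ)).map (Int.cast : ℤ → ZMod p) =
      vandermonde fun i => (a i : ZMod p) := by ext; simp
  have hC : (of fun i j : Fin k => ((b i).choose j : ℤ)).map (Int.cast : ℤ → ZMod p) =
      of fun i j : Fin k => ((b i).choose j : ZMod p) := by ext; simp
  rw [← ZMod.intCast_zmod_eq_zero_iff_dvd, Int.cast_mul, Int.cast_det, Int.cast_det, hV, hC]
  refine mul_ne_zero (det_vandermonde_ne_zero_iff.2 ha) ?_
  exact right_ne_zero_of_mul (factorial_mul_det_choose (S := ZMod p) b ▸ det_vandermonde_ne_zero_iff.2 hb)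

theorem IsPrimitiveRoot.dvd_eval_one_of_aeval_eq_zero {K : Type*} [Field K] [CharZero K]
    {p : ℕ} [Fact p.Prime] {z : K} (hz : IsPrimitiveRoot z p) {Q : ℤ[X]} (hQ : aeval z Q = 0) :
    (p : ℤ) ∣ Q.eval 1 := by
  have hp := (Fact.out : p.Prime).pos
  obtain ⟨V, rfl⟩ :=
    cyclotomic_eq_minpoly hz hp ▸ minpoly.isIntegrallyClosed_dvd (hz.isIntegral hp) hQ
  rw [eval_mul, eval_one_cyclotomic_prime]
  exact dvd_mul_right _ _

theorem chebotarev_roots_of_unity_general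
    (ℓ : ℕ) [Fact (Nat.Prime ℓ)]
    (z : ℂ) (hz : IsPrimitiveRoot z ℓ)
    (M : Matrix (ZMod ℓ) (ZMod ℓ) ℂ) (hM : ∀ i j, M i j = z ^ (i * j).val)
    (k : ℕ) (ri ci : Fin k → ZMod ℓ)
    (hri : Function.Injective ri) (hci : Function.Injective ci) :
    (M.submatrix ri ci).det ≠ 0 := by
  set a : Fin k → ℕ := fun i => (ri i).val
  set b : Fin k → ℕ := fun j => (ci j).val
  obtain ⟨Q, hP, hQ⟩ := exists_det_X_pow_mul_eq_X_sub_one_pow_mul (R := ℤ) a b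
  have hsub : M.submatrix ri ci = (of fun i j => (X : ℤ[X]) ^ (a i * b j)).map (aeval z) := by
    ext i j
    simp [a, b, hM, ZMod.val_mul, ← pow_eq_pow_mod _ hz.pow_eq_one]
  have hz1 : z - 1 ≠ 0 := sub_ne_zero.2 (hz.ne_one (Fact.out : ℓ.Prime).one_lt)
  rw [hsub, ← AlgHom.mapMatrix_apply, ← AlgHom.map_det, hP, map_mul, map_pow, map_sub, aeval_X,
    map_one, mul_ne_zero_iff_left (pow_ne_zero _ hz1)]
  intro hQz
  refine not_dvd_det_vandermonde_mul_det_choose (p := ℓ) ?_ ?_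
    (hQ ▸ hz.dvd_eval_one_of_aeval_eq_zero hQz)
  · simpa [a] using hri
  · simpa [b] using hci

/-- Chebotarëv's theorem on roots of unity: every square submatrix of the
DFT matrix `(z^{ij})` for a primitive `ℓ`-th root of unity, `ℓ` an odd prime,
has nonzero determinant. -/
theorem chebotarev_roots_of_unity
    (ℓ : ℕ) [Fact (Nat.Prime ℓ)] (hodd : Odd ℓ)
    (z : ℂ) (hz : IsPrimitiveRoot z ℓ)
    (M : Matrix (ZMod ℓ) (ZMod ℓ) ℂ) (hM : ∀ i j, M i j = z ^ (i * j).val)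
    (k : ℕ) (ri ci : Fin k → ZMod ℓ)
    (hri : Function.Injective ri) (hci : Function.Injective ci) :
    (M.submatrix ri ci).det ≠ 0 :=
  chebotarev_roots_of_unity_general ℓ z hz M hM k ri ci hri hci
end
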